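/- arXiv:2204.08575 — 3 statements merged into one kernel-verified Lean document; each statement's English description precedes it below -/
import Mathlib

section
/- For w ∈ (0,1), define g_opt(w) = (1/2)·[1 − cos(π·F(w)/F(1))], where F(w) = ∫₀^w dv/(f(v)·v·(1−v)) for a positive density f with F(1) < ∞. Then g_opt(0) = 0, g_opt(1) = 1, g_opt is nondecreasing, and the functional J̄[g] := ∫₀¹ f(w)·w·(1−w)·(G'(w))² dw with G(w) = arccos(1 − 2g(w)) satisfies J̄[g_opt] = π²/F(1). -/
open Real MeasureTheory intervalIntegral

/-- With `F(w) = ∫₀^w dv/(f(v)v(1−v))` and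
`g_opt(w) = (1/2)(1 − cos(π F(w)/F(1)))`, one has `g_opt(0)=0`, `g_opt(1)=1`,
`g_opt` nondecreasing on `[0,1]`, and
`J̄[g_opt] = ∫₀¹ f(w)w(1−w)(G'(w))² dw = π²/F(1)` where `G = arccos(1−2g_opt)`. -/
theorem stmt_11 (f : ℝ → ℝ)
    (hcont : ContinuousOn f (Set.Ioo 0 1))
    (hpos : ∀ w ∈ Set.Ioo (0:ℝ) 1, 0 < f w)
    (hone : ∫ w in Set.Ioo (0:ℝ) 1, f w = 1)
    (hint : IntegrableOn (fun v => (f v * v * (1 - v))⁻¹) (Set.Ioo (0:ℝ) 1))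
    (F : ℝ → ℝ) (hF : ∀ w, F w = ∫ v in (0:ℝ)..w, (f v * v * (1 - v))⁻¹)
    (gopt : ℝ → ℝ) (hg : ∀ w, gopt w = (1 - Real.cos (π * F w / F 1)) / 2) :
    gopt 0 = 0 ∧ gopt 1 = 1 ∧ MonotoneOn gopt (Set.Icc 0 1) ∧
    ∫ w in Set.Ioo (0:ℝ) 1,
        f w * w * (1 - w) * (deriv (fun v => Real.arccos (1 - 2 * gopt v)) w) ^ 2
      = π ^ 2 / F 1 := by
  set c : ℝ → ℝ := fun v => (f v * v * (1 - v))⁻¹ with hc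
  have hc_pos : ∀ v ∈ Set.Ioo (0:ℝ) 1, 0 < c v := by
    intro v hv
    have := hpos v hv
    have h1 : 0 < v := hv.1
    have h2 : v < 1 := hv.2
    have h3 : 0 < 1 - v := by linarith
    show 0 < (f v * v * (1 - v))⁻¹
    positivity
  have hII : ∀ a b : ℝ, 0 ≤ a → a ≤ b → b ≤ 1 → IntervalIntegrable c volume a b := by
    intro a b ha hab hb
    rw [intervalIntegrable_iff_integrableOn_Ioc_of_le hab]
    have h : IntegrableOn c (Set.Ioo a b) := hint.mono_set (fun x hx =>
      ⟨lt_of_le_of_lt ha hx.1, lt_of_lt_of_le hx.2 hb⟩)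
    exact h.congr_set_ae Ioo_ae_eq_Ioc.symm
  have hF0 : F 0 = 0 := by rw [hF]; simp
  have h01 : ∀ᵐ v : ℝ, v ≠ 0 ∧ v ≠ 1 := by
    have hm : volume ({0, 1} : Set ℝ) = 0 :=
      (Set.toFinite ({0, 1} : Set ℝ)).measure_zero volume
    have h := (measure_eq_zero_iff_ae_notMem (μ := volume)).mp hm
    filter_upwards [h] with v hv
    simpa using hv
  -- monotonicity of F on [0,1]
  have hFmono : ∀ a ∈ Set.Icc (0:ℝ) 1, ∀ b ∈ Set.Icc (0:ℝ) 1, a ≤ b → F a ≤ F b := by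
    intro a ha b hb hab
    have h1 : F a + ∫ v in a..b, c v = F b := by
      rw [hF, hF]
      exact integral_add_adjacent_intervals (hII 0 a le_rfl ha.1 ha.2)
        (hII a b ha.1 hab hb.2)
    have h2 : 0 ≤ ∫ v in a..b, c v := by
      apply intervalIntegral.integral_nonneg_of_ae_restrict hab
      filter_upwards [ae_restrict_mem measurableSet_Icc, ae_restrict_of_ae h01]
        with v hv hv01
      exact (hc_pos v ⟨lt_of_le_of_ne (ha.1.trans hv.1) (Ne.symm hv01.1),
        lt_of_le_of_ne (hv.2.trans hb.2) hv01.2⟩).le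
    linarith
  have hF1pos : 0 < F 1 := by
    rw [hF]
    exact intervalIntegral_pos_of_pos_on (hII 0 1 le_rfl zero_le_one le_rfl)
      hc_pos one_pos
  have hF1ne : F 1 ≠ 0 := hF1pos.ne'
  have hFnonneg : ∀ w ∈ Set.Icc (0:ℝ) 1, 0 ≤ F w := fun w hw => by
    have := hFmono 0 (by norm_num) w hw hw.1; linarith
  have hFle : ∀ w ∈ Set.Icc (0:ℝ) 1, F w ≤ F 1 := fun w hw =>
    hFmono w hw 1 (by norm_num) hw.2
  have hargmem : ∀ w ∈ Set.Icc (0:ℝ) 1, π * F w / F 1 ∈ Set.Icc 0 π := by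
    intro w hw
    constructor
    · exact div_nonneg (mul_nonneg pi_pos.le (hFnonneg w hw)) hF1pos.le
    · rw [div_le_iff₀ hF1pos]
      nlinarith [hFle w hw, pi_pos]
  -- the three easy conclusions
  have hg0 : gopt 0 = 0 := by rw [hg, hF0]; simp
  have hg1 : gopt 1 = 1 := by
    rw [hg, mul_div_assoc, div_self hF1ne, mul_one, Real.cos_pi]; norm_num
  have hmono : MonotoneOn gopt (Set.Icc 0 1) := by
    intro a ha b hb hab
    rw [hg, hg]
    have hcos : Real.cos (π * F b / F 1) ≤ Real.cos (π * F a / F 1) := by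
      apply Real.cos_le_cos_of_nonneg_of_le_pi (hargmem a ha).1 (hargmem b hb).2
      gcongr
      exact hFmono a ha b hb hab
    linarith
  have hccont : ContinuousOn c (Set.Ioo 0 1) := by
    apply ContinuousOn.inv₀
    · exact (hcont.mul continuousOn_id).mul
        ((continuous_const.sub continuous_id).continuousOn)
    · intro v hv
      have h1 : 0 < v := hv.1
      have h2 : v < 1 := hv.2
      have hfv := hpos v hv
      have h4 : 0 < 1 - v := by linarith
      have : 0 < f v * v * (1 - v) := by positivity
      exact this.ne'
  refine ⟨hg0, hg1, hmono, ?_⟩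
  -- derivative computation on Ioo 0 1
  have hderiv : ∀ w ∈ Set.Ioo (0:ℝ) 1,
      deriv (fun v => Real.arccos (1 - 2 * gopt v)) w = π / F 1 * c w := by
    intro w hw
    have hFd : HasDerivAt F (c w) w := by
      have hFa : F = fun u => ∫ v in (0:ℝ)..u, c v := funext hF
      rw [hFa]
      apply intervalIntegral.integral_hasDerivAt_right
        (hII 0 w le_rfl hw.1.le hw.2.le)
      · exact ⟨Set.Ioo 0 1, Ioo_mem_nhds hw.1 hw.2,
          hccont.aestronglyMeasurable measurableSet_Ioo⟩
      · exact hccont.continuousAt (Ioo_mem_nhds hw.1 hw.2)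
    have heq : (fun v => Real.arccos (1 - 2 * gopt v)) =ᶠ[nhds w]
        (fun v => π / F 1 * F v) := by
      filter_upwards [Ioo_mem_nhds hw.1 hw.2] with v hv
      have hvIcc : v ∈ Set.Icc (0:ℝ) 1 := ⟨hv.1.le, hv.2.le⟩
      rw [hg]
      have : 1 - 2 * ((1 - Real.cos (π * F v / F 1)) / 2) = Real.cos (π * F v / F 1) := by
        ring
      rw [this, Real.arccos_cos (hargmem v hvIcc).1 (hargmem v hvIcc).2]
      ring
    rw [heq.deriv_eq]
    exact (hFd.const_mul (π / F 1)).deriv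
  -- final integral computation
  have hFIoo : ∫ v in Set.Ioo (0:ℝ) 1, c v = F 1 := by
    rw [hF, intervalIntegral.integral_of_le zero_le_one,
      MeasureTheory.integral_Ioc_eq_integral_Ioo]
  have hcongr : ∀ w ∈ Set.Ioo (0:ℝ) 1,
      f w * w * (1 - w) * (deriv (fun v => Real.arccos (1 - 2 * gopt v)) w) ^ 2
        = (π / F 1) ^ 2 * c w := by
    intro w hw
    rw [hderiv w hw]
    have h1 : 0 < w := hw.1
    have h2 : 0 < 1 - w := by linarith [hw.2]
    have h3 : 0 < f w := hpos w hw
    have hne : f w * w * (1 - w) ≠ 0 := by positivity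
    show f w * w * (1 - w) * (π / F 1 * (f w * w * (1 - w))⁻¹) ^ 2
        = (π / F 1) ^ 2 * (f w * w * (1 - w))⁻¹
    field_simp
  rw [MeasureTheory.setIntegral_congr_fun measurableSet_Ioo hcongr,
    MeasureTheory.integral_const_mul, hFIoo]
  field_simp
end

section
/- For any twice differentiable g : [0,1] → [0,1] with g(0) = 0 and g(1) = 1, and positive density f on (0,1) with ∫₀¹ dw/(f(w)w(1−w)) < ∞, one has ∫₀¹ f(w)·w·(1−w)·(G'(w))² dw ≥ π²·[∫₀¹ dw/(f(w)w(1−w))]⁻¹, where G(w) = arccos(1 − 2g(w)); equality holds iff g = g_opt as given by g_opt(w) = (1/2)[1 − cos(π·F(w)/F(1))] with F(w) = ∫₀^w dv/(f(v)v(1−v)). -/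
/-!
Put `G = arccos (1 - 2 g)` and `ρ(w) = f(w) w (1 - w)`, so that `G` runs from `0` to `π`.
Between the last zero `c` of `g` and the first later point `d` where `g = 1` we have `0 < g < 1`,
so `G` is differentiable there and Cauchy–Schwarz with weights `ρ`, `ρ⁻¹` gives
`π² = (∫_c^d G')² ≤ (∫_c^d ρ G'²) (∫_c^d ρ⁻¹) ≤ (∫_0^1 ρ G'²) (∫_0^1 ρ⁻¹)`.
Equality forces `(c, d) = (0, 1)` and `G'` proportional to `ρ⁻¹`, i.e. `G = π F / F(1)`.

That `ρ G'²` is integrable at all is a Glaeser-type estimate: a nonnegative function `h` with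
`M`-Lipschitz derivative satisfies `h'(w)² ≤ 4 M h(w) + 4 (h(w) / δ)²` at distance `δ` from the
boundary, which applied to `g` or `1 - g` gives `w (1 - w) G'(w)² ≤ C`.
-/

open Real MeasureTheory intervalIntegral Set Filter

section WeightedCauchySchwarz

variable {α : Type*} [MeasurableSpace α] {μ : Measure α} {ρ u : α → ℝ}

theorem integrable_of_integrable_mul_sq (hρ : ∀ᵐ x ∂μ, 0 < ρ x) (hu : AEStronglyMeasurable u μ)
    (hρu : Integrable (fun x => ρ x * u x ^ 2) μ) (hρinv : Integrable (fun x => (ρ x)⁻¹) μ) :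
    Integrable u μ := by
  refine ((hρu.add hρinv).div_const 2).mono' hu ?_
  filter_upwards [hρ] with x hx
  have hsq := mul_nonneg hx.le (sq_nonneg (|u x| - (ρ x)⁻¹))
  have hinv : ρ x * (ρ x)⁻¹ = 1 := mul_inv_cancel₀ hx.ne'
  have hexpand : ρ x * (|u x| - (ρ x)⁻¹) ^ 2 = ρ x * u x ^ 2 - 2 * |u x| + (ρ x)⁻¹ := by
    rw [← sq_abs (u x)]
    linear_combination ((ρ x)⁻¹ - 2 * |u x|) * hinv
  change |u x| ≤ (ρ x * u x ^ 2 + (ρ x)⁻¹) / 2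
  linarith

theorem mul_sub_mul_inv_sq_ae_eq (hρ : ∀ᵐ x ∂μ, 0 < ρ x) (c : ℝ) :
    (fun x => ρ x * (u x - c * (ρ x)⁻¹) ^ 2) =ᵐ[μ]
      fun x => ρ x * u x ^ 2 - 2 * c * u x + c ^ 2 * (ρ x)⁻¹ := by
  filter_upwards [hρ] with x hx
  have hinv : ρ x * (ρ x)⁻¹ = 1 := mul_inv_cancel₀ hx.ne'
  linear_combination (c ^ 2 * (ρ x)⁻¹ - 2 * c * u x) * hinv

variable (hρ : ∀ᵐ x ∂μ, 0 < ρ x) (hu : Integrable u μ)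
  (hρu : Integrable (fun x => ρ x * u x ^ 2) μ) (hρinv : Integrable (fun x => (ρ x)⁻¹) μ)
include hρ hu hρu hρinv

theorem integral_mul_sub_mul_inv_sq (c : ℝ) :
    ∫ x, ρ x * (u x - c * (ρ x)⁻¹) ^ 2 ∂μ =
      ∫ x, ρ x * u x ^ 2 ∂μ - 2 * c * ∫ x, u x ∂μ + c ^ 2 * ∫ x, (ρ x)⁻¹ ∂μ := by
  rw [integral_congr_ae (mul_sub_mul_inv_sq_ae_eq hρ c),
    integral_add (f := fun x => ρ x * u x ^ 2 - 2 * c * u x) (g := fun x => c ^ 2 * (ρ x)⁻¹)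
      (hρu.sub (hu.const_mul _)) (hρinv.const_mul _),
    integral_sub (f := fun x => ρ x * u x ^ 2) (g := fun x => 2 * c * u x) hρu (hu.const_mul _),
    MeasureTheory.integral_const_mul, MeasureTheory.integral_const_mul]

theorem sq_integral_le_integral_mul_sq_mul_integral_inv :
    (∫ x, u x ∂μ) ^ 2 ≤ (∫ x, ρ x * u x ^ 2 ∂μ) * ∫ x, (ρ x)⁻¹ ∂μ := by
  have hquad : ∀ c : ℝ, 0 ≤ (∫ x, (ρ x)⁻¹ ∂μ) * (c * c) + (-2 * ∫ x, u x ∂μ) * c +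
      ∫ x, ρ x * u x ^ 2 ∂μ := fun c => by
    have := integral_nonneg_of_ae (μ := μ) (f := fun x => ρ x * (u x - c * (ρ x)⁻¹) ^ 2)
      (by filter_upwards [hρ] with x hx using mul_nonneg hx.le (sq_nonneg _))
    rw [integral_mul_sub_mul_inv_sq hρ hu hρu hρinv] at this
    linarith
  have := discrim_le_zero hquad
  rw [discrim] at this
  linarith

theorem ae_eq_mul_inv_of_sq_integral_eq (hA : 0 < ∫ x, (ρ x)⁻¹ ∂μ)
    (heq : (∫ x, u x ∂μ) ^ 2 = (∫ x, ρ x * u x ^ 2 ∂μ) * ∫ x, (ρ x)⁻¹ ∂μ) :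
    u =ᵐ[μ] fun x => (∫ y, u y ∂μ) / (∫ y, (ρ y)⁻¹ ∂μ) * (ρ x)⁻¹ := by
  set c := (∫ y, u y ∂μ) / ∫ y, (ρ y)⁻¹ ∂μ
  have hzero : ∫ x, ρ x * (u x - c * (ρ x)⁻¹) ^ 2 ∂μ = 0 := by
    rw [integral_mul_sub_mul_inv_sq hρ hu hρu hρinv]
    simp only [c]
    generalize ∫ x, u x ∂μ = U at heq ⊢
    generalize ∫ x, (ρ x)⁻¹ ∂μ = A at hA heq ⊢
    field_simp
    linear_combination -heq
  have hint : Integrable (fun x => ρ x * (u x - c * (ρ x)⁻¹) ^ 2) μ :=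
    (((hρu.sub (hu.const_mul _)).add (hρinv.const_mul _))).congr
      (mul_sub_mul_inv_sq_ae_eq hρ c).symm
  have hnn : 0 ≤ᵐ[μ] fun x => ρ x * (u x - c * (ρ x)⁻¹) ^ 2 := by
    filter_upwards [hρ] with x hx using mul_nonneg hx.le (sq_nonneg _)
  filter_upwards [(integral_eq_zero_iff_of_nonneg_ae hnn hint).mp hzero, hρ] with x hx hxρ
  have := (mul_eq_zero.mp hx).resolve_left hxρ.ne'
  exact sub_eq_zero.mp (pow_eq_zero_iff two_ne_zero |>.mp this)

end WeightedCauchySchwarz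

theorem exists_Ioo_mapsTo_Ioo {G : ℝ → ℝ} {a b y z : ℝ} (hab : a ≤ b) (hyz : y < z)
    (hG : ContinuousOn G (Icc a b)) (hmaps : MapsTo G (Icc a b) (Icc y z))
    (hGa : G a = y) (hGb : G b = z) :
    ∃ c d, a ≤ c ∧ c < d ∧ d ≤ b ∧ G c = y ∧ G d = z ∧ MapsTo G (Ioo c d) (Ioo y z) := by
  -- `c` is the last time `G` takes the value `y`, and `d` the first time after `c` it takes `z`
  obtain ⟨c, ⟨hc, hGc⟩, hc_max⟩ := (isCompact_Icc.of_isClosed_subset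
    (hG.preimage_isClosed_of_isClosed isClosed_Icc (isClosed_singleton (x := y)))
    inter_subset_left).exists_isGreatest ⟨a, ⟨le_rfl, hab⟩, hGa⟩
  obtain ⟨d, ⟨hd, hGd⟩, hd_min⟩ := (isCompact_Icc.of_isClosed_subset
    ((hG.mono (Icc_subset_Icc hc.1 le_rfl)).preimage_isClosed_of_isClosed isClosed_Icc
      (isClosed_singleton (x := z))) inter_subset_left).exists_isLeast ⟨b, ⟨hc.2, le_rfl⟩, hGb⟩
  have hcd : c < d := hd.1.lt_of_ne fun h => by
    rw [← h] at hGd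
    exact hyz.ne (hGc.symm.trans hGd)
  refine ⟨c, d, hc.1, hcd, hd.2, hGc, hGd, fun x hx => ?_⟩
  have hx' : x ∈ Icc a b := ⟨hc.1.trans hx.1.le, hx.2.le.trans hd.2⟩
  refine ⟨(hmaps hx').1.lt_of_ne fun h => ?_, (hmaps hx').2.lt_of_ne fun h => ?_⟩
  · exact (hc_max ⟨hx', h.symm⟩).not_gt hx.1
  · exact (hd_min ⟨⟨hx.1.le, hx'.2⟩, h⟩).not_gt hx.2

section PositivePrimitive

variable {φ : ℝ → ℝ} {a b : ℝ} (hφ : IntegrableOn φ (Ioo a b)) (hpos : ∀ x ∈ Ioo a b, 0 < φ x)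
include hφ hpos

theorem strictMonoOn_intervalIntegral_of_pos :
    StrictMonoOn (fun x => ∫ t in a..x, φ t) (Icc a b) := by
  intro x hx y hy hxy
  have hφ' : IntervalIntegrable φ volume a b :=
    (intervalIntegrable_iff_integrableOn_Ioo_of_le (hx.1.trans hx.2)).mpr hφ
  have hsub : ∀ t ∈ Icc a b, uIcc a t ⊆ uIcc a b := fun t ht =>
    uIcc_subset_uIcc left_mem_uIcc (mem_uIcc_of_le ht.1 ht.2)
  rw [← sub_pos, integral_interval_sub_left (hφ'.mono_set (hsub y hy)) (hφ'.mono_set (hsub x hx))]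
  refine intervalIntegral_pos_of_pos_on (hφ'.mono_set (uIcc_subset_uIcc
    (mem_uIcc_of_le hx.1 hx.2) (mem_uIcc_of_le hy.1 hy.2))) (fun t ht => hpos t
    ⟨hx.1.trans_lt ht.1, ht.2.trans_le hy.2⟩) hxy

theorem div_intervalIntegral_mem_Icc {x : ℝ} (hx : x ∈ Icc a b) :
    (∫ t in a..x, φ t) / (∫ t in a..b, φ t) ∈ Icc 0 1 := by
  have hmono := (strictMonoOn_intervalIntegral_of_pos hφ hpos).monotoneOn
  have h0 : 0 ≤ ∫ t in a..x, φ t := by simpa using hmono ⟨le_rfl, hx.1.trans hx.2⟩ hx hx.1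
  have h1 : (∫ t in a..x, φ t) ≤ ∫ t in a..b, φ t := hmono hx ⟨hx.1.trans hx.2, le_rfl⟩ hx.2
  exact ⟨div_nonneg h0 (h0.trans h1), div_le_one_of_le₀ h1 (h0.trans h1)⟩

theorem setIntegral_Ioo_pos (hab : a < b) : 0 < ∫ x in Ioo a b, φ x := by
  rw [← integral_Ioc_eq_integral_Ioo, ← integral_of_le hab.le]
  exact intervalIntegral_pos_of_pos_on
    ((intervalIntegrable_iff_integrableOn_Ioo_of_le hab.le).mpr hφ) hpos hab

theorem eq_and_eq_of_setIntegral_Ioo_le {c d : ℝ} (hac : a ≤ c) (hcd : c ≤ d) (hdb : d ≤ b)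
    (h : ∫ x in Ioo a b, φ x ≤ ∫ x in Ioo c d, φ x) : c = a ∧ d = b := by
  have hmono := strictMonoOn_intervalIntegral_of_pos hφ hpos
  have hab := hac.trans (hcd.trans hdb)
  have hprim : ∀ x ∈ Icc a b, IntervalIntegrable φ volume a x := fun x hx =>
    ((intervalIntegrable_iff_integrableOn_Ioo_of_le hab).mpr hφ).mono_set
      (uIcc_subset_uIcc left_mem_uIcc (mem_uIcc_of_le hx.1 hx.2))
  have ha : a ∈ Icc a b := ⟨le_rfl, hab⟩
  have hb : b ∈ Icc a b := ⟨hab, le_rfl⟩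
  have hc : c ∈ Icc a b := ⟨hac, hcd.trans hdb⟩
  have hd : d ∈ Icc a b := ⟨hac.trans hcd, hdb⟩
  rw [← integral_Ioc_eq_integral_Ioo, ← integral_Ioc_eq_integral_Ioo, ← integral_of_le hab,
    ← integral_of_le hcd, ← integral_interval_sub_left (hprim b hb) (hprim a ha),
    ← integral_interval_sub_left (hprim d hd) (hprim c hc)] at h
  have hca := hmono.monotoneOn ha hc hac
  have hdb' := hmono.monotoneOn hd hb hdb
  exact ⟨hmono.injOn hc ha (by linarith), hmono.injOn hd hb (by linarith)⟩

end PositivePrimitive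

section WeightedDirichletOnInterval

variable {G ρ : ℝ → ℝ} {a b : ℝ}

theorem setIntegral_Ioo_deriv_eq_sub (hab : a ≤ b) (hG : ContinuousOn G (Icc a b))
    (hGd : ∀ x ∈ Ioo a b, DifferentiableAt ℝ G x) (hG' : IntegrableOn (deriv G) (Ioo a b)) :
    ∫ x in Ioo a b, deriv G x = G b - G a := by
  rw [← integral_Ioc_eq_integral_Ioo, ← integral_of_le hab]
  exact integral_eq_sub_of_hasDerivAt_of_le hab hG (fun x hx => (hGd x hx).hasDerivAt)
    ((intervalIntegrable_iff_integrableOn_Ioo_of_le hab).mpr hG')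

variable (hρ : ∀ x ∈ Ioo a b, 0 < ρ x) (hρinv : IntegrableOn (fun x => (ρ x)⁻¹) (Ioo a b))
include hρ hρinv

theorem sq_sub_le_setIntegral_mul_sq_deriv_mul_setIntegral_inv (hab : a ≤ b)
    (hG : ContinuousOn G (Icc a b)) (hGd : ∀ x ∈ Ioo a b, DifferentiableAt ℝ G x)
    (hρG : IntegrableOn (fun x => ρ x * deriv G x ^ 2) (Ioo a b)) :
    (G b - G a) ^ 2 ≤ (∫ x in Ioo a b, ρ x * deriv G x ^ 2) * ∫ x in Ioo a b, (ρ x)⁻¹ := by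
  have hρ' : ∀ᵐ x ∂volume.restrict (Ioo a b), 0 < ρ x :=
    (ae_restrict_iff' measurableSet_Ioo).mpr (ae_of_all _ hρ)
  have hG' := integrable_of_integrable_mul_sq hρ' (measurable_deriv G).aestronglyMeasurable hρG hρinv
  rw [← setIntegral_Ioo_deriv_eq_sub hab hG hGd hG']
  exact sq_integral_le_integral_mul_sq_mul_integral_inv hρ' hG' hρG hρinv

theorem eq_add_mul_intervalIntegral_inv_of_sq_sub_eq (hab : a ≤ b)
    (hG : ContinuousOn G (Icc a b)) (hGd : ∀ x ∈ Ioo a b, DifferentiableAt ℝ G x)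
    (hρG : IntegrableOn (fun x => ρ x * deriv G x ^ 2) (Ioo a b))
    (hA : 0 < ∫ x in Ioo a b, (ρ x)⁻¹)
    (heq : (G b - G a) ^ 2 = (∫ x in Ioo a b, ρ x * deriv G x ^ 2) * ∫ x in Ioo a b, (ρ x)⁻¹) :
    ∀ x ∈ Icc a b, G x = G a + (G b - G a) / (∫ y in Ioo a b, (ρ y)⁻¹) * ∫ y in a..x, (ρ y)⁻¹ := by
  have hρ' : ∀ᵐ x ∂volume.restrict (Ioo a b), 0 < ρ x :=
    (ae_restrict_iff' measurableSet_Ioo).mpr (ae_of_all _ hρ)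
  have hG' : IntegrableOn (deriv G) (Ioo a b) :=
    integrable_of_integrable_mul_sq hρ' (measurable_deriv G).aestronglyMeasurable hρG hρinv
  have hFTC := setIntegral_Ioo_deriv_eq_sub hab hG hGd hG'
  have hae := ae_eq_mul_inv_of_sq_integral_eq hρ' hG' hρG hρinv hA (by rwa [hFTC])
  rw [hFTC] at hae
  intro x hx
  have hsub : Ioo a x ⊆ Ioo a b := Ioo_subset_Ioo_right hx.2
  rw [integral_of_le hx.1, integral_Ioc_eq_integral_Ioo, ← MeasureTheory.integral_const_mul,
    ← integral_congr_ae (ae_restrict_of_ae_restrict_of_subset hsub hae),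
    setIntegral_Ioo_deriv_eq_sub hx.1 (hG.mono (Icc_subset_Icc_right hx.2))
      (fun y hy => hGd y (hsub hy)) (hG'.mono_set hsub)]
  ring

theorem setIntegral_mul_sq_deriv_of_eq_add_mul_intervalIntegral_inv
    (hρc : ContinuousOn ρ (Ioo a b)) {k : ℝ}
    (hG : ∀ x ∈ Icc a b, G x = G a + k * ∫ y in a..x, (ρ y)⁻¹) :
    ∫ x in Ioo a b, ρ x * deriv G x ^ 2 = k ^ 2 * ∫ x in Ioo a b, (ρ x)⁻¹ := by
  have hinvc : ContinuousOn (fun x => (ρ x)⁻¹) (Ioo a b) :=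
    hρc.inv₀ fun x hx => (hρ x hx).ne'
  have hderiv : ∀ x ∈ Ioo a b, deriv G x = k * (ρ x)⁻¹ := fun x hx => by
    have hF : HasDerivAt (fun t => ∫ y in a..t, (ρ y)⁻¹) (ρ x)⁻¹ x :=
      integral_hasDerivAt_right ((intervalIntegrable_iff_integrableOn_Ioo_of_le hx.1.le).mpr
        (hρinv.mono_set (Ioo_subset_Ioo_right hx.2.le)))
        (hinvc.stronglyMeasurableAtFilter isOpen_Ioo x hx) (hinvc.continuousAt (Ioo_mem_nhds hx.1 hx.2))
    exact (((hF.const_mul k).const_add (G a)).congr_of_eventuallyEq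
      (eventually_of_mem (Icc_mem_nhds hx.1 hx.2) hG)).deriv
  rw [← MeasureTheory.integral_const_mul]
  refine setIntegral_congr_fun measurableSet_Ioo fun x hx => ?_
  rw [hderiv x hx]
  field_simp [(hρ x hx).ne']

variable {y z : ℝ} (hab : a ≤ b) (hyz : y < z) (hG : ContinuousOn G (Icc a b))
  (hmaps : MapsTo G (Icc a b) (Icc y z)) (hGa : G a = y) (hGb : G b = z)
  (hGd : ∀ x ∈ Ioo a b, G x ∈ Ioo y z → DifferentiableAt ℝ G x)
  (hρG : IntegrableOn (fun x => ρ x * deriv G x ^ 2) (Ioo a b))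
include hab hyz hG hmaps hGa hGb hGd hρG

theorem exists_Ioo_mapsTo_Ioo_sq_sub_le :
    ∃ c d, a ≤ c ∧ c < d ∧ d ≤ b ∧ MapsTo G (Ioo c d) (Ioo y z) ∧
      (z - y) ^ 2 ≤ (∫ x in Ioo a b, ρ x * deriv G x ^ 2) * ∫ x in Ioo c d, (ρ x)⁻¹ := by
  obtain ⟨c, d, hac, hcd, hdb, hGc, hGd', hcd_maps⟩ :=
    exists_Ioo_mapsTo_Ioo hab hyz hG hmaps hGa hGb
  have hsub : Ioo c d ⊆ Ioo a b := Ioo_subset_Ioo hac hdb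
  refine ⟨c, d, hac, hcd, hdb, hcd_maps, ?_⟩
  have hcd_le := sq_sub_le_setIntegral_mul_sq_deriv_mul_setIntegral_inv
    (fun x hx => hρ x (hsub hx)) (hρinv.mono_set hsub) hcd.le (hG.mono (Icc_subset_Icc hac hdb))
    (fun x hx => hGd x (hsub hx) (hcd_maps hx)) (hρG.mono_set hsub)
  rw [hGc, hGd'] at hcd_le
  refine hcd_le.trans (mul_le_mul_of_nonneg_right (setIntegral_mono_set hρG ?_ hsub.eventuallyLE)
    (setIntegral_nonneg measurableSet_Ioo fun x hx => (inv_pos.mpr (hρ x (hsub hx))).le))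
  exact (ae_restrict_iff' measurableSet_Ioo).mpr
    (ae_of_all _ fun x hx => mul_nonneg (hρ x hx).le (sq_nonneg _))

theorem sq_sub_mul_inv_le_setIntegral_mul_sq_deriv :
    (z - y) ^ 2 * (∫ x in Ioo a b, (ρ x)⁻¹)⁻¹ ≤ ∫ x in Ioo a b, ρ x * deriv G x ^ 2 := by
  obtain ⟨c, d, hac, hcd, hdb, -, hle⟩ :=
    exists_Ioo_mapsTo_Ioo_sq_sub_le hρ hρinv hab hyz hG hmaps hGa hGb hGd hρG
  have hA := setIntegral_Ioo_pos hρinv (fun x hx => inv_pos.mpr (hρ x hx))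
    (hac.trans_lt (hcd.trans_le hdb))
  rw [← div_eq_mul_inv, div_le_iff₀ hA]
  refine hle.trans (mul_le_mul_of_nonneg_left (setIntegral_mono_set hρinv ?_
    (Ioo_subset_Ioo hac hdb).eventuallyLE) ?_)
  · exact (ae_restrict_iff' measurableSet_Ioo).mpr
      (ae_of_all _ fun x hx => (inv_pos.mpr (hρ x hx)).le)
  · exact setIntegral_nonneg measurableSet_Ioo fun x hx => mul_nonneg (hρ x hx).le (sq_nonneg _)

theorem eq_add_mul_intervalIntegral_inv_of_mapsTo_of_sq_sub_eq
    (heq : (z - y) ^ 2 = (∫ x in Ioo a b, ρ x * deriv G x ^ 2) * ∫ x in Ioo a b, (ρ x)⁻¹) :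
    ∀ x ∈ Icc a b, G x = y + (z - y) / (∫ t in Ioo a b, (ρ t)⁻¹) * ∫ t in a..x, (ρ t)⁻¹ := by
  obtain ⟨c, d, hac, hcd, hdb, hcd_maps, hle⟩ :=
    exists_Ioo_mapsTo_Ioo_sq_sub_le hρ hρinv hab hyz hG hmaps hGa hGb hGd hρG
  have hA := setIntegral_Ioo_pos hρinv (fun x hx => inv_pos.mpr (hρ x hx))
    (hac.trans_lt (hcd.trans_le hdb))
  have hI : 0 < ∫ x in Ioo a b, ρ x * deriv G x ^ 2 :=
    pos_of_mul_pos_left (heq ▸ pow_pos (sub_pos.mpr hyz) 2) hA.le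
  -- all the inverse weight must sit on `(c, d)`, which forces `(c, d) = (a, b)`
  obtain ⟨rfl, rfl⟩ := eq_and_eq_of_setIntegral_Ioo_le hρinv (fun x hx => inv_pos.mpr (hρ x hx))
    hac hcd.le hdb (le_of_mul_le_mul_left (heq ▸ hle) hI)
  rw [← hGa, ← hGb] at heq ⊢
  exact eq_add_mul_intervalIntegral_inv_of_sq_sub_eq hρ hρinv hab hG
    (fun x hx => hGd x hx (hcd_maps hx)) hρG hA heq

theorem setIntegral_mul_sq_deriv_eq_iff (hρc : ContinuousOn ρ (Ioo a b)) :
    ∫ x in Ioo a b, ρ x * deriv G x ^ 2 = (z - y) ^ 2 * (∫ x in Ioo a b, (ρ x)⁻¹)⁻¹ ↔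
      ∀ x ∈ Icc a b, G x = y + (z - y) * ((∫ t in a..x, (ρ t)⁻¹) / ∫ t in a..b, (ρ t)⁻¹) := by
  have hA := setIntegral_Ioo_pos hρinv (fun x hx => inv_pos.mpr (hρ x hx))
    (hab.lt_of_ne (by rintro rfl; exact hyz.ne (hGa.symm.trans hGb)))
  rw [integral_of_le hab, integral_Ioc_eq_integral_Ioo, eq_mul_inv_iff_mul_eq₀ hA.ne', eq_comm]
  constructor
  · intro heq x hx
    rw [eq_add_mul_intervalIntegral_inv_of_mapsTo_of_sq_sub_eq hρ hρinv hab hyz hG hmaps hGa hGb hGd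
      hρG heq x hx]
    ring
  · intro hGx
    rw [setIntegral_mul_sq_deriv_of_eq_add_mul_intervalIntegral_inv hρ hρinv hρc
      (k := (z - y) / ∫ t in Ioo a b, (ρ t)⁻¹) fun x hx => by rw [hGx x hx, hGa]; ring]
    generalize ∫ t in Ioo a b, (ρ t)⁻¹ = A at hA ⊢
    field_simp

end WeightedDirichletOnInterval

section NonnegDerivBound

variable {h h' : ℝ → ℝ} {w δ M : ℝ}

theorem mul_abs_deriv_le_of_nonneg (hM : 0 ≤ M)
    (hnn : ∀ x ∈ Icc (w - δ) (w + δ), 0 ≤ h x) (hcont : ContinuousOn h (Icc (w - δ) (w + δ)))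
    (hderiv : ∀ x ∈ Ioo (w - δ) (w + δ), HasDerivAt h (h' x) x)
    (hlip : ∀ x ∈ Ioo (w - δ) (w + δ), |h' x - h' w| ≤ M * |x - w|)
    {t : ℝ} (ht : 0 ≤ t) (htδ : t ≤ δ) :
    t * |h' w| ≤ h w + M * t ^ 2 := by
  have hw : 0 ≤ h w := hnn w ⟨by linarith, by linarith⟩
  rcases ht.eq_or_lt with rfl | ht
  · simpa using hw
  obtain ⟨ξ, hξ, hξeq⟩ := exists_hasDerivAt_eq_slope h h' (lt_add_of_pos_right w ht)
    (hcont.mono (Icc_subset_Icc (by linarith) (by linarith)))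
    (fun x hx => hderiv x ⟨by linarith [hx.1], by linarith [hx.2]⟩)
  obtain ⟨η, hη, hηeq⟩ := exists_hasDerivAt_eq_slope h h' (sub_lt_self w ht)
    (hcont.mono (Icc_subset_Icc (by linarith) (by linarith)))
    (fun x hx => hderiv x ⟨by linarith [hx.1], by linarith [hx.2]⟩)
  rw [add_sub_cancel_left, eq_div_iff ht.ne'] at hξeq
  rw [sub_sub_cancel, eq_div_iff ht.ne'] at hηeq
  have hnear : ∀ x ∈ Ioo (w - t) (w + t), |h' x - h' w| ≤ M * t := fun x hx =>
    (hlip x ⟨by linarith [hx.1], by linarith [hx.2]⟩).trans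
      (mul_le_mul_of_nonneg_left (abs_sub_lt_iff.mpr ⟨by linarith [hx.2], by linarith [hx.1]⟩).le hM)
  have hξw := abs_le.mp (hnear ξ ⟨by linarith [hξ.1], hξ.2⟩)
  have hηw := abs_le.mp (hnear η ⟨hη.1, by linarith [hη.2]⟩)
  have hplus := hnn (w + t) ⟨by linarith, by linarith⟩
  have hminus := hnn (w - t) ⟨by linarith, by linarith⟩
  rw [← abs_of_pos ht, ← abs_mul, abs_of_pos ht, abs_le]
  constructor <;> nlinarith

theorem sq_deriv_le_of_nonneg (hM : 0 < M) (hδ : 0 < δ)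
    (hnn : ∀ x ∈ Icc (w - δ) (w + δ), 0 ≤ h x) (hcont : ContinuousOn h (Icc (w - δ) (w + δ)))
    (hderiv : ∀ x ∈ Ioo (w - δ) (w + δ), HasDerivAt h (h' x) x)
    (hlip : ∀ x ∈ Ioo (w - δ) (w + δ), |h' x - h' w| ≤ M * |x - w|) :
    h' w ^ 2 ≤ 4 * M * h w + 4 * (h w / δ) ^ 2 := by
  have hslope := fun t => mul_abs_deriv_le_of_nonneg (t := t) hM.le hnn hcont hderiv hlip
  have hw : 0 ≤ h w := hnn w ⟨by linarith, by linarith⟩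
  rw [← sq_abs]
  rcases le_or_gt |h' w| (2 * M * δ) with hsmall | hlarge
  · have := hslope (|h' w| / (2 * M)) (by positivity) (by rw [div_le_iff₀ (by positivity)]; linarith)
    field_simp at this
    nlinarith [sq_nonneg (h w / δ)]
  · have := hslope δ hδ.le le_rfl
    have hbound : |h' w| ≤ 2 * (h w / δ) := by
      rw [mul_div_assoc', le_div_iff₀ hδ]
      nlinarith
    nlinarith [abs_nonneg (h' w)]

end NonnegDerivBound

theorem mul_sq_deriv_le_of_nonneg {h h' : ℝ → ℝ} {w M L : ℝ} (hw : w ∈ Ioo (0:ℝ) 1) (hM : 0 < M)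
    (hnn : ∀ x ∈ Icc (0:ℝ) 1, 0 ≤ h x) (hcont : ContinuousOn h (Icc 0 1))
    (hderiv : ∀ x ∈ Ioo (0:ℝ) 1, HasDerivAt h (h' x) x)
    (hlip : ∀ x ∈ Ioo (0:ℝ) 1, |h' x - h' w| ≤ M * |x - w|)
    (hleft : h w ≤ L * w) (hright : h w ≤ L * (1 - w)) :
    w * (1 - w) * h' w ^ 2 ≤ 4 * (M + L) * h w := by
  obtain ⟨hw0, hw1⟩ := hw
  set δ := min w (1 - w)
  have hδ : 0 < δ := lt_min hw0 (by linarith)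
  have hδw : δ ≤ w := min_le_left _ _
  have hδ1 : δ ≤ 1 - w := min_le_right _ _
  have hIcc : Icc (w - δ) (w + δ) ⊆ Icc 0 1 := Icc_subset_Icc (by linarith) (by linarith)
  have hIoo : Ioo (w - δ) (w + δ) ⊆ Ioo 0 1 := Ioo_subset_Ioo (by linarith) (by linarith)
  have hsq := sq_deriv_le_of_nonneg hM hδ (fun x hx => hnn x (hIcc hx)) (hcont.mono hIcc)
    (fun x hx => hderiv x (hIoo hx)) (fun x hx => hlip x (hIoo hx))
  have hhw : 0 ≤ h w := hnn w ⟨hw0.le, hw1.le⟩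
  have hhδ : h w / δ ≤ L := by
    rw [div_le_iff₀ hδ, show δ = min w (1 - w) from rfl]
    rcases min_choice w (1 - w) with hδ' | hδ' <;> rw [hδ'] <;> linarith
  have hwδ : w * (1 - w) ≤ δ := le_min (by nlinarith) (by nlinarith)
  calc w * (1 - w) * h' w ^ 2 ≤ δ * h' w ^ 2 := by gcongr
    _ ≤ δ * (4 * M * h w + 4 * (h w / δ) ^ 2) := by gcongr
    _ = 4 * M * δ * h w + 4 * (h w / δ) * h w := by field_simp
    _ ≤ 4 * M * 1 * h w + 4 * L * h w := by gcongr; linarith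
    _ = 4 * (M + L) * h w := by ring

theorem exists_mul_sq_deriv_le_mul_one_sub {g : ℝ → ℝ} (hg : ContDiffOn ℝ 2 g (Icc 0 1))
    (hg0 : g 0 = 0) (hg1 : g 1 = 1) (hgrange : MapsTo g (Icc 0 1) (Icc 0 1)) :
    ∃ C, 0 ≤ C ∧ ∀ w ∈ Ioo (0:ℝ) 1, w * (1 - w) * deriv g w ^ 2 ≤ C * (g w * (1 - g w)) := by
  set g' := derivWithin g (Icc 0 1)
  have hg' : ContDiffOn ℝ 1 g' (Icc 0 1) :=
    hg.derivWithin (uniqueDiffOn_Icc zero_lt_one) (by norm_num)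
  obtain ⟨L, hL⟩ := hg.exists_lipschitzOnWith (by norm_num) (convex_Icc 0 1) isCompact_Icc
  obtain ⟨M, hM⟩ := hg'.exists_lipschitzOnWith one_ne_zero (convex_Icc 0 1) isCompact_Icc
  have hderiv : ∀ x ∈ Ioo (0:ℝ) 1, HasDerivAt g (g' x) x := fun x hx =>
    (hg.differentiableOn (by norm_num) x (Ioo_subset_Icc_self hx)).hasDerivWithinAt.hasDerivAt
      (Icc_mem_nhds hx.1 hx.2)
  have hlip : ∀ x ∈ Ioo (0:ℝ) 1, ∀ y ∈ Ioo (0:ℝ) 1, |g' x - g' y| ≤ (M + 1) * |x - y| := by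
    intro x hx y hy
    have := hM.dist_le_mul x (Ioo_subset_Icc_self hx) y (Ioo_subset_Icc_self hy)
    rw [Real.dist_eq, Real.dist_eq] at this
    nlinarith [abs_nonneg (x - y)]
  refine ⟨8 * (M + 1 + L), by positivity, fun w hw => ?_⟩
  have hw' := Ioo_subset_Icc_self hw
  have hleft : g w ≤ L * w := by
    have := hL.dist_le_mul w hw' 0 ⟨le_rfl, zero_le_one⟩
    rw [Real.dist_eq, Real.dist_eq, hg0, sub_zero, sub_zero, abs_of_pos hw.1] at this
    exact (le_abs_self _).trans this
  have hright : 1 - g w ≤ L * (1 - w) := by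
    have := hL.dist_le_mul 1 ⟨zero_le_one, le_rfl⟩ w hw'
    rw [Real.dist_eq, Real.dist_eq, hg1, abs_of_pos (sub_pos.mpr hw.2)] at this
    exact (le_abs_self _).trans this
  obtain ⟨hgw0, hgw1⟩ := hgrange hw'
  have hK : (0:ℝ) ≤ M + 1 + L := by positivity
  rw [(hderiv w hw).deriv]
  -- bound `g'²` through whichever of `g`, `1 - g` is at most `1 / 2`
  rcases le_total (g w) (1 / 2) with hlow | hhigh
  · have := mul_sq_deriv_le_of_nonneg (M := M + 1) hw (by positivity) (fun x hx => (hgrange hx).1)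
      hg.continuousOn hderiv (fun x hx => hlip x hx w hw) hleft (by linarith)
    nlinarith [mul_nonneg (mul_nonneg hK hgw0) (by linarith : 0 ≤ 1 - 2 * g w)]
  · have := mul_sq_deriv_le_of_nonneg (h := fun x => 1 - g x) (h' := fun x => -g' x) (M := M + 1) hw
      (by positivity) (fun x hx => sub_nonneg.mpr (hgrange hx).2)
      (continuousOn_const.sub hg.continuousOn) (fun x hx => (hderiv x hx).const_sub 1)
      (fun x hx => by rw [neg_sub_neg, abs_sub_comm]; exact hlip x hx w hw)
      (by linarith) hright
    rw [neg_sq] at this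
    nlinarith [mul_nonneg (mul_nonneg hK (sub_nonneg.mpr hgw1)) (by linarith : 0 ≤ 2 * g w - 1)]

theorem hasDerivAt_arccos_one_sub_two_mul {g : ℝ → ℝ} {g' w : ℝ} (hg : HasDerivAt g g' w)
    (h0 : 0 < g w) (h1 : g w < 1) :
    HasDerivAt (fun v => arccos (1 - 2 * g v)) (g' / √(g w * (1 - g w))) w := by
  have hsqrt : √(1 - (1 - 2 * g w) ^ 2) = 2 * √(g w * (1 - g w)) := by
    rw [show 1 - (1 - 2 * g w) ^ 2 = 2 ^ 2 * (g w * (1 - g w)) by ring,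
      sqrt_mul (by norm_num), sqrt_sq (by norm_num)]
  have hpos : 0 < √(g w * (1 - g w)) := sqrt_pos.mpr (mul_pos h0 (sub_pos.mpr h1))
  refine ((hasDerivAt_arccos (by linarith) (by linarith)).comp w
    ((hg.const_mul 2).const_sub 1)).congr_deriv ?_
  rw [hsqrt]
  field_simp

theorem differentiableAt_arccos_one_sub_two_mul {g : ℝ → ℝ} {w : ℝ} (hg : DifferentiableAt ℝ g w)
    (h : arccos (1 - 2 * g w) ∈ Ioo 0 π) :
    DifferentiableAt ℝ (fun v => arccos (1 - 2 * g v)) w :=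
  (differentiableAt_arccos.mpr ⟨fun h' => by simp [h'] at h, fun h' => by simp [h'] at h⟩).comp w
    ((hg.const_mul 2).const_sub 1)

theorem deriv_arccos_one_sub_two_mul_eq_zero {g : ℝ → ℝ} {w : ℝ} (h : g w = 0 ∨ g w = 1) :
    deriv (fun v => arccos (1 - 2 * g v)) w = 0 := by
  rcases h with h | h
  · exact IsLocalMin.deriv_eq_zero (Eventually.of_forall fun v => by simp [h, arccos_nonneg])
  · exact IsLocalMax.deriv_eq_zero (Eventually.of_forall fun v => by
      simp [h, show (1:ℝ) - 2 = -1 by norm_num, arccos_le_pi])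

theorem exists_mul_sq_deriv_arccos_le {g : ℝ → ℝ} (hg : ContDiffOn ℝ 2 g (Icc 0 1))
    (hg0 : g 0 = 0) (hg1 : g 1 = 1) (hgrange : MapsTo g (Icc 0 1) (Icc 0 1)) :
    ∃ C, ∀ w ∈ Ioo (0:ℝ) 1, w * (1 - w) * deriv (fun v => arccos (1 - 2 * g v)) w ^ 2 ≤ C := by
  obtain ⟨C, hC0, hC⟩ := exists_mul_sq_deriv_le_mul_one_sub hg hg0 hg1 hgrange
  refine ⟨C, fun w hw => ?_⟩
  obtain ⟨hgw0, hgw1⟩ := hgrange (Ioo_subset_Icc_self hw)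
  rcases hgw0.eq_or_lt with h0 | h0
  · rw [deriv_arccos_one_sub_two_mul_eq_zero (.inl h0.symm)]; simpa using hC0
  rcases hgw1.eq_or_lt with h1 | h1
  · rw [deriv_arccos_one_sub_two_mul_eq_zero (.inr h1)]; simpa using hC0
  have hgd : HasDerivAt g (deriv g w) w :=
    ((hg.differentiableOn (by norm_num) w (Ioo_subset_Icc_self hw)).differentiableAt
      (Icc_mem_nhds hw.1 hw.2)).hasDerivAt
  have hprod : 0 < g w * (1 - g w) := mul_pos h0 (sub_pos.mpr h1)
  rw [(hasDerivAt_arccos_one_sub_two_mul hgd h0 h1).deriv, div_pow, sq_sqrt hprod.le,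
    mul_div_assoc', div_le_iff₀ hprod]
  exact hC w hw

theorem arccos_one_sub_two_mul_eq_iff {u θ : ℝ} (hu : u ∈ Icc (0:ℝ) 1) (hθ : θ ∈ Icc 0 π) :
    arccos (1 - 2 * u) = θ ↔ u = (1 - cos θ) / 2 := by
  constructor
  · rintro rfl
    rw [cos_arccos (by linarith [hu.2]) (by linarith [hu.1])]
    ring
  · rintro rfl
    rw [show 1 - 2 * ((1 - cos θ) / 2) = cos θ by ring, arccos_cos hθ.1 hθ.2]

theorem integrableOn_mul_sq_deriv_of_mul_sq_deriv_le {f G : ℝ → ℝ} {C : ℝ}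
    (hf : IntegrableOn f (Ioo 0 1)) (hC : ∀ w ∈ Ioo (0:ℝ) 1, w * (1 - w) * deriv G w ^ 2 ≤ C) :
    IntegrableOn (fun w => f w * w * (1 - w) * deriv G w ^ 2) (Ioo 0 1) := by
  refine (hf.norm.mul_const C).mono' ?_ ((ae_restrict_iff' measurableSet_Ioo).mpr
    (ae_of_all _ fun w hw => ?_))
  · have := hf.aestronglyMeasurable
    have := (measurable_deriv G).aestronglyMeasurable (μ := volume.restrict (Ioo 0 1))
    fun_prop
  · have hnn : 0 ≤ w * (1 - w) * deriv G w ^ 2 :=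
      mul_nonneg (mul_nonneg hw.1.le (sub_pos.mpr hw.2).le) (sq_nonneg _)
    rw [show f w * w * (1 - w) * deriv G w ^ 2 = f w * (w * (1 - w) * deriv G w ^ 2) by ring,
      norm_mul, Real.norm_of_nonneg hnn]
    exact mul_le_mul_of_nonneg_left (hC w hw) (norm_nonneg _)

/-- For any twice differentiable `g : [0,1] → [0,1]` with `g(0)=0`, `g(1)=1`, and
positive density `f` on `(0,1)` with `A = ∫₀¹ dw/(f(w)w(1−w)) < ∞`,
`∫₀¹ f(w)w(1−w)(G'(w))² dw ≥ π²/A` where `G = arccos(1−2g)`, with equality iff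
`g = g_opt`, where `g_opt(w) = (1/2)(1 − cos(π F(w)/F(1)))`, `F(w) = ∫₀^w dv/(f(v)v(1−v))`. -/
theorem stmt_12 (f g : ℝ → ℝ)
    (hcont : ContinuousOn f (Set.Ioo 0 1))
    (hpos : ∀ w ∈ Set.Ioo (0:ℝ) 1, 0 < f w)
    (hone : ∫ w in Set.Ioo (0:ℝ) 1, f w = 1)
    (hint : IntegrableOn (fun v => (f v * v * (1 - v))⁻¹) (Set.Ioo (0:ℝ) 1))
    (hg : ContDiffOn ℝ 2 g (Set.Icc 0 1))
    (hg0 : g 0 = 0) (hg1 : g 1 = 1)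
    (hgrange : ∀ w ∈ Set.Icc (0:ℝ) 1, g w ∈ Set.Icc (0:ℝ) 1) :
    π ^ 2 * (∫ w in Set.Ioo (0:ℝ) 1, (f w * w * (1 - w))⁻¹)⁻¹ ≤
      ∫ w in Set.Ioo (0:ℝ) 1,
        f w * w * (1 - w) * (deriv (fun v => Real.arccos (1 - 2 * g v)) w) ^ 2 ∧
    ((∫ w in Set.Ioo (0:ℝ) 1,
        f w * w * (1 - w) * (deriv (fun v => Real.arccos (1 - 2 * g v)) w) ^ 2)
        = π ^ 2 * (∫ w in Set.Ioo (0:ℝ) 1, (f w * w * (1 - w))⁻¹)⁻¹ ↔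
      ∀ w ∈ Set.Icc (0:ℝ) 1,
        g w = (1 - Real.cos (π * (∫ v in (0:ℝ)..w, (f v * v * (1 - v))⁻¹)
          / (∫ v in (0:ℝ)..(1:ℝ), (f v * v * (1 - v))⁻¹))) / 2) := by
  set G : ℝ → ℝ := fun v => arccos (1 - 2 * g v)
  have hρ : ∀ w ∈ Ioo (0:ℝ) 1, 0 < f w * w * (1 - w) := fun w hw =>
    mul_pos (mul_pos (hpos w hw) hw.1) (sub_pos.mpr hw.2)
  have hρc : ContinuousOn (fun w => f w * w * (1 - w)) (Ioo 0 1) :=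
    (hcont.mul continuousOn_id).mul (continuousOn_const.sub continuousOn_id)
  have hG : ContinuousOn G (Icc 0 1) := continuous_arccos.comp_continuousOn
    (continuousOn_const.sub (continuousOn_const.mul hg.continuousOn))
  have hGmaps : MapsTo G (Icc 0 1) (Icc 0 π) := fun v _ => ⟨arccos_nonneg _, arccos_le_pi _⟩
  have hG0 : G 0 = 0 := by simp [G, hg0]
  have hG1 : G 1 = π := by norm_num [G, hg1]
  have hGd : ∀ x ∈ Ioo (0:ℝ) 1, G x ∈ Ioo 0 π → DifferentiableAt ℝ G x := fun x hx =>
    differentiableAt_arccos_one_sub_two_mul ((hg.differentiableOn (by norm_num) x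
      (Ioo_subset_Icc_self hx)).differentiableAt (Icc_mem_nhds hx.1 hx.2))
  obtain ⟨C, hC⟩ := exists_mul_sq_deriv_arccos_le hg hg0 hg1 hgrange
  have hI := integrableOn_mul_sq_deriv_of_mul_sq_deriv_le (integrable_of_integral_eq_one hone) hC
  have hle := sq_sub_mul_inv_le_setIntegral_mul_sq_deriv hρ hint zero_le_one pi_pos hG hGmaps hG0
    hG1 hGd hI
  have hiff := setIntegral_mul_sq_deriv_eq_iff hρ hint zero_le_one pi_pos hG hGmaps hG0 hG1 hGd hI hρc
  rw [sub_zero] at hle hiff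
  refine ⟨hle, hiff.trans (forall₂_congr fun x hx => ?_)⟩
  obtain ⟨h0, h1⟩ := div_intervalIntegral_mem_Icc hint (fun t ht => inv_pos.mpr (hρ t ht)) hx
  rw [zero_add, mul_div_assoc]
  exact arccos_one_sub_two_mul_eq_iff (hgrange x hx)
    ⟨mul_nonneg pi_pos.le h0, mul_le_of_le_one_right pi_pos.le h1⟩
end

section
/- For the arcsine density f*(w) = 1/(π√(w(1−w))) on (0,1), the optimal function g_opt reduces to the interleaving attack: g_opt(w) = w for all w ∈ [0,1]. -/
/-!
The substitution `v = (1 + sin θ) / 2` shows that `∫₀^w dv / √(v(1-v)) = arcsin (2w - 1) + π/2`,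
so `π F(w) / F(1) = arcsin (2w - 1) + π/2`, whose cosine is `-sin (arcsin (2w - 1)) = 1 - 2w`.
The improper integral at the endpoints needs no separate estimate: the integrand is the
nonnegative derivative of a function continuous on `[0, w]`, hence integrable.
-/

open Real intervalIntegral MeasureTheory Set

/-- Holds for every real `x`: for `x ≤ 0` both sides are `0` because `√x = 0`. -/
lemma inv_mul_sqrt_inv_mul (c x : ℝ) : ((c * √x)⁻¹ * x)⁻¹ = c * (√x)⁻¹ := by
  rcases le_or_gt x 0 with hx | hx
  · simp [sqrt_eq_zero'.2 hx]
  · have hs : (√x) ^ 2 = x := sq_sqrt hx.le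
    have hs0 : 0 < √x := sqrt_pos.2 hx
    nth_rewrite 2 [← hs]
    field_simp

lemma hasDerivAt_arcsin_two_mul_sub_one {v : ℝ} (h0 : 0 < v) (h1 : v < 1) :
    HasDerivAt (fun v => arcsin (2 * v - 1)) (√(v * (1 - v)))⁻¹ v := by
  have hlin : HasDerivAt (fun v : ℝ => 2 * v - 1) 2 v := by
    simpa using ((hasDerivAt_id v).const_mul 2).sub_const 1
  have hsqrt : √(1 - (2 * v - 1) ^ 2) = 2 * √(v * (1 - v)) := by
    rw [show 1 - (2 * v - 1) ^ 2 = 2 ^ 2 * (v * (1 - v)) by ring,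
      sqrt_mul (by norm_num), sqrt_sq zero_le_two]
  have hpos : 0 < √(v * (1 - v)) := sqrt_pos.2 (mul_pos h0 (sub_pos.2 h1))
  refine ((hasDerivAt_arcsin (by linarith) (by linarith)).comp v hlin).congr_deriv ?_
  rw [hsqrt]
  field_simp

lemma integral_inv_sqrt_mul_one_sub {w : ℝ} (hw0 : 0 ≤ w) (hw1 : w ≤ 1) :
    ∫ v in (0:ℝ)..w, (√(v * (1 - v)))⁻¹ = arcsin (2 * w - 1) + π / 2 := by
  have hcont : ContinuousOn (fun v => arcsin (2 * v - 1)) (Icc 0 w) := by fun_prop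
  have hderiv : ∀ v ∈ Ioo 0 w, HasDerivAt (fun v => arcsin (2 * v - 1)) (√(v * (1 - v)))⁻¹ v :=
    fun v hv => hasDerivAt_arcsin_two_mul_sub_one hv.1 (hv.2.trans_le hw1)
  have hint : IntervalIntegrable (fun v => (√(v * (1 - v)))⁻¹) volume 0 w :=
    (intervalIntegrable_iff_integrableOn_Ioc_of_le hw0).2 <|
      integrableOn_deriv_of_nonneg hcont hderiv fun v _ => by positivity
  rw [integral_eq_sub_of_hasDerivAt_of_le hw0 hcont hderiv hint]
  norm_num [arcsin_neg]

/-- For the arcsine density `f*(w) = 1/(π√(w(1−w)))`, the optimal attack function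
`g_opt(w) = (1/2)(1 − cos(π F(w)/F(1)))` with `F(w) = ∫₀^w dv/(f*(v)v(1−v))` reduces
to the interleaving attack `g_opt(w) = w`. -/
theorem stmt_13 (w : ℝ) (hw : w ∈ Set.Icc (0:ℝ) 1) :
    (1 - Real.cos (π *
        (∫ v in (0:ℝ)..w, (((π * Real.sqrt (v * (1 - v)))⁻¹) * v * (1 - v))⁻¹)
      / (∫ v in (0:ℝ)..(1:ℝ), (((π * Real.sqrt (v * (1 - v)))⁻¹) * v * (1 - v))⁻¹))) / 2
      = w := by
  obtain ⟨hw0, hw1⟩ := hw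
  have hF : ∀ u : ℝ, ∫ v in (0:ℝ)..u, ((π * √(v * (1 - v)))⁻¹ * v * (1 - v))⁻¹
      = π * ∫ v in (0:ℝ)..u, (√(v * (1 - v)))⁻¹ := fun u => by
    rw [← intervalIntegral.integral_const_mul]
    congr with v
    rw [mul_assoc _ v, inv_mul_sqrt_inv_mul]
  rw [hF, hF, integral_inv_sqrt_mul_one_sub hw0 hw1,
    integral_inv_sqrt_mul_one_sub zero_le_one le_rfl]
  have harg : π * (π * (arcsin (2 * w - 1) + π / 2)) / (π * (arcsin (2 * 1 - 1) + π / 2))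
      = arcsin (2 * w - 1) + π / 2 := by
    rw [show (2:ℝ) * 1 - 1 = 1 by norm_num, arcsin_one]
    field_simp
    ring
  rw [harg, cos_add_pi_div_two, sin_arcsin (by linarith) (by linarith)]
  ring
end
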